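/- arXiv:2407.07471 — 5 statements merged into one kernel-verified Lean document; each statement's English description precedes it below -/
import Mathlib

section
/- Let X ⊆ ℝⁿ be nonempty, closed and convex, f, c : ℝⁿ → ℝ continuous, and H(y; x) = max{f(y) − τ_f(x), c(y)} with τ_f(x) = f(x) + ρ[c(x)]₊ and ρ ≥ 0. If x̄ ∈ X is a local solution of the problem: minimize f(x) over x ∈ X subject to c(x) ≤ 0, then x̄ is a local minimizer of the function y ↦ H(y; x̄) over X. -/
theorem stmt_2_general {n : ℕ} (X : Set (EuclideanSpace ℝ (Fin n)))
    (f c : EuclideanSpace ℝ (Fin n) → ℝ)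
    (ρ : ℝ)
    (xbar : EuclideanSpace ℝ (Fin n)) (hxbarfeas : c xbar ≤ 0)
    (hlocal : ∃ U ∈ nhds xbar, ∀ x ∈ X ∩ U, c x ≤ 0 → f xbar ≤ f x) :
    ∃ V ∈ nhds xbar, ∀ y ∈ X ∩ V,
      max (f xbar - (f xbar + ρ * max (c xbar) 0)) (c xbar)
        ≤ max (f y - (f xbar + ρ * max (c xbar) 0)) (c y) := by
  obtain ⟨U, hU, hopt⟩ := hlocal
  refine ⟨U, hU, fun y hy => ?_⟩
  simp only [max_eq_right hxbarfeas, mul_zero, add_zero, sub_self, max_eq_left hxbarfeas]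
  rcases le_or_gt (c y) 0 with hcy | hcy
  · exact le_max_of_le_left (sub_nonneg.2 (hopt y hy hcy))
  · exact le_max_of_le_right hcy.le

/-- If `x̄ ∈ X` is a local solution of `min f over X s.t. c ≤ 0`, then `x̄` is a local
minimizer of the improvement function `y ↦ H(y; x̄)` over `X`. -/
theorem stmt_2 {n : ℕ} (X : Set (EuclideanSpace ℝ (Fin n)))
    (hXne : X.Nonempty) (hXclosed : IsClosed X) (hXconv : Convex ℝ X)
    (f c : EuclideanSpace ℝ (Fin n) → ℝ) (hf : Continuous f) (hc : Continuous c)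
    (ρ : ℝ) (hρ : 0 ≤ ρ)
    (xbar : EuclideanSpace ℝ (Fin n)) (hxbarX : xbar ∈ X) (hxbarfeas : c xbar ≤ 0)
    (hlocal : ∃ U ∈ nhds xbar, ∀ x ∈ X ∩ U, c x ≤ 0 → f xbar ≤ f x) :
    ∃ V ∈ nhds xbar, ∀ y ∈ X ∩ V,
      max (f xbar - (f xbar + ρ * max (c xbar) 0)) (c xbar)
        ≤ max (f y - (f xbar + ρ * max (c xbar) 0)) (c y) :=
  stmt_2_general X f c ρ xbar hxbarfeas hlocal
end

section
/- Let ψᵏ, ψ : ℝⁿ → ℝ ∪ {+∞} be proper functions with epi ψ ⊆ LimInn(epi ψᵏ). Suppose εᵏ → 0, K ⊆ ℕ is an infinite index set, xᵏ is an εᵏ-minimizer of ψᵏ for each k ∈ K, xᵏ → x̄ along K, and ψᵏ(xᵏ) → ψ(x̄) along K. Then x̄ ∈ argmin ψ. -/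
open Filter Topology

/-! Fix `y` and a real `α ≥ ψ(y)`. Nesting of epigraphs gives points `(yᵏ, αᵏ) ∈ epi ψᵏ` with
`αᵏ → α`, and `εᵏ`-minimality bounds `ψᵏ(xᵏ) ≤ ψᵏ(yᵏ) + εᵏ ≤ αᵏ + εᵏ → α`. Passing to the limit
along the subsequence gives `ψ(x̄) ≤ α`, and letting `α ↓ ψ(y)` gives `ψ(x̄) ≤ ψ(y)`. -/

theorem le_of_tendsto_approxMinimizer {ι X : Type*} {l : Filter ι} [l.NeBot]
    {f : ι → X → EReal} {x y : ι → X} {ε a : ι → ℝ} {L : EReal} {α : ℝ}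
    (hmin : ∀ k z, f k (x k) ≤ f k z + (ε k : EReal)) (hε : Tendsto ε l (𝓝 0))
    (hL : Tendsto (fun k => f k (x k)) l (𝓝 L))
    (hepi : ∀ᶠ k in l, f k (y k) ≤ (a k : EReal)) (ha : Tendsto a l (𝓝 α)) :
    L ≤ α := by
  have hbound : ∀ᶠ k in l, f k (x k) ≤ ((a k + ε k : ℝ) : EReal) := by
    filter_upwards [hepi] with k hk
    calc f k (x k) ≤ f k (y k) + (ε k : EReal) := hmin k (y k)
      _ ≤ (a k : EReal) + (ε k : EReal) := add_le_add_left hk _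
      _ = ((a k + ε k : ℝ) : EReal) := (EReal.coe_add _ _).symm
  have hlim : Tendsto (fun k => ((a k + ε k : ℝ) : EReal)) l (𝓝 (α : EReal)) :=
    EReal.tendsto_coe.mpr (by simpa using ha.add hε)
  exact le_of_tendsto_of_tendsto hL hlim hbound

theorem stmt_5_general {n : ℕ}
    (ψk : ℕ → EuclideanSpace ℝ (Fin n) → EReal) (ψ : EuclideanSpace ℝ (Fin n) → EReal)
    (hnest : ∀ (x : EuclideanSpace ℝ (Fin n)) (α : ℝ), ψ x ≤ (α : EReal) →
      ∃ q : ℕ → EuclideanSpace ℝ (Fin n) × ℝ,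
        (∀ᶠ k in atTop, ψk k (q k).1 ≤ ((q k).2 : EReal)) ∧
        Tendsto q atTop (nhds (x, α)))
    (εk : ℕ → ℝ) (hεlim : Tendsto εk atTop (nhds 0))
    (xk : ℕ → EuclideanSpace ℝ (Fin n))
    (hmin : ∀ k y, ψk k (xk k) ≤ ψk k y + (εk k : EReal))
    (φ : ℕ → ℕ) (hφ : StrictMono φ)
    (xbar : EuclideanSpace ℝ (Fin n))
    (hψconv : Tendsto (fun i => ψk (φ i) (xk (φ i))) atTop (nhds (ψ xbar))) :
    ∀ y, ψ xbar ≤ ψ y := by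
  intro y
  refine EReal.le_of_forall_lt_iff_le.mp fun α hα => ?_
  obtain ⟨q, hepi, hq⟩ := hnest y α hα.le
  have hφ' : Tendsto φ atTop atTop := hφ.tendsto_atTop
  exact le_of_tendsto_approxMinimizer (fun i => hmin (φ i)) (hεlim.comp hφ') hψconv
    (hφ'.eventually hepi) (((continuous_snd.tendsto _).comp hq).comp hφ')

/-- Epigraphical nesting and approximate minimizers: if `epi ψ ⊆ LimInn (epi ψᵏ)`,
`εᵏ → 0`, `xᵏ` is an `εᵏ`-minimizer of `ψᵏ`, and along an infinite index set (encoded by a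
strictly monotone subsequence) `xᵏ → x̄` and `ψᵏ(xᵏ) → ψ(x̄)`, then `x̄ ∈ argmin ψ`. -/
theorem stmt_5 {n : ℕ}
    (ψk : ℕ → EuclideanSpace ℝ (Fin n) → EReal) (ψ : EuclideanSpace ℝ (Fin n) → EReal)
    (hproperk : ∀ k, (∀ x, ψk k x ≠ ⊥) ∧ ∃ x, ψk k x ≠ ⊤)
    (hproper : (∀ x, ψ x ≠ ⊥) ∧ ∃ x, ψ x ≠ ⊤)
    (hnest : ∀ (x : EuclideanSpace ℝ (Fin n)) (α : ℝ), ψ x ≤ (α : EReal) →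
      ∃ q : ℕ → EuclideanSpace ℝ (Fin n) × ℝ,
        (∀ᶠ k in atTop, ψk k (q k).1 ≤ ((q k).2 : EReal)) ∧
        Tendsto q atTop (nhds (x, α)))
    (εk : ℕ → ℝ) (hε0 : ∀ k, 0 ≤ εk k) (hεlim : Tendsto εk atTop (nhds 0))
    (xk : ℕ → EuclideanSpace ℝ (Fin n))
    (hmin : ∀ k y, ψk k (xk k) ≤ ψk k y + (εk k : EReal))
    (φ : ℕ → ℕ) (hφ : StrictMono φ)
    (xbar : EuclideanSpace ℝ (Fin n))
    (hxconv : Tendsto (fun i => xk (φ i)) atTop (nhds xbar))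
    (hψconv : Tendsto (fun i => ψk (φ i) (xk (φ i))) atTop (nhds (ψ xbar))) :
    ∀ y, ψ xbar ≤ ψ y :=
  stmt_5_general ψk ψ hnest εk hεlim xk hmin φ hφ xbar hψconv
end

section
/- Let X ⊆ ℝⁿ be convex and closed, H : ℝⁿ × ℝⁿ → ℝ, and for each x ∈ X let A(x) be a finite nonempty index set and M_a(·; x) : ℝⁿ → ℝ convex functions with M(y; x) = min_{a ∈ A(x)} M_a(y; x). Assume: (a) M(x; x) = H(x; x) for all x ∈ X; (b) there exists μ̄ ≥ 0 with H(y; x) ≤ M(y; x) + (μ̄/2)‖y − x‖² for all x, y ∈ X. If x̄ ∈ X is a local minimizer of H(·; x̄) over X, then for every a ∈ A(x̄) with M_a(x̄; x̄) = H(x̄; x̄) one has x̄ ∈ argmin_{x ∈ X} M_a(x; x̄). -/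
/-!
Since the model is at most its active piece, local minimality of `H(·; x̄)` and the model bound give
`M_a(x̄; x̄) ≤ M_a(y; x̄) + (μ̄/2)‖y - x̄‖²` for `y ∈ X` near `x̄`. For a convex function a
quadratic perturbation is invisible to first order: restricting to the segment from `x̄` to
`x ∈ X` gives `M_a(x̄; x̄) ≤ M_a(x; x̄) + t (μ̄/2)‖x - x̄‖²` for all small `t > 0`, and `t → 0`
yields the global inequality.
-/

open Filter Topology Set

section

variable {E : Type*} [NormedAddCommGroup E] [NormedSpace ℝ E] {X : Set E} {f : E → ℝ}
  {x₀ x : E} {c : ℝ}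

theorem ConvexOn.le_add_mul_of_le_add_sq_norm_lineMap (hf : ConvexOn ℝ X f) (hx₀ : x₀ ∈ X)
    (hx : x ∈ X) {t : ℝ} (ht : t ∈ Ioo 0 1)
    (hle : f x₀ ≤ f (AffineMap.lineMap x₀ x t) + c * ‖AffineMap.lineMap x₀ x t - x₀‖ ^ 2) :
    f x₀ ≤ f x + c * ‖x - x₀‖ ^ 2 * t := by
  obtain ⟨ht₀, ht₁⟩ := ht
  have hnorm : ‖AffineMap.lineMap x₀ x t - x₀‖ = t * ‖x - x₀‖ := by
    rw [← vsub_eq_sub, AffineMap.lineMap_vsub_left, norm_smul, Real.norm_of_nonneg ht₀.le,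
      vsub_eq_sub]
  have hconv : f (AffineMap.lineMap x₀ x t) ≤ (1 - t) * f x₀ + t * f x := by
    rw [AffineMap.lineMap_apply_module]
    exact hf.2 hx₀ hx (by linarith) ht₀.le (by ring)
  rw [hnorm] at hle
  have hscaled : t * f x₀ ≤ t * (f x + c * ‖x - x₀‖ ^ 2 * t) := by nlinarith
  exact le_of_mul_le_mul_left hscaled ht₀

theorem ConvexOn.isMinOn_of_eventually_le_add_sq_norm_sub (hf : ConvexOn ℝ X f) (hx₀ : x₀ ∈ X)
    (hloc : ∀ᶠ y in 𝓝[X] x₀, f x₀ ≤ f y + c * ‖y - x₀‖ ^ 2) : IsMinOn f X x₀ := by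
  intro x hx
  have hsegment : ∀ᶠ t in 𝓝[>] (0 : ℝ), t ∈ Ioo 0 1 := Ioo_mem_nhdsGT one_pos
  have hlineMap : Tendsto (AffineMap.lineMap x₀ x) (𝓝[>] (0 : ℝ)) (𝓝[X] x₀) := by
    refine tendsto_nhdsWithin_iff.2 ⟨?_, ?_⟩
    · simpa using (AffineMap.lineMap_continuous.tendsto (0 : ℝ)).mono_left nhdsWithin_le_nhds
    · exact hsegment.mono fun t ht => hf.1.lineMap_mem hx₀ hx (Ioo_subset_Icc_self ht)
  have hbound : ∀ᶠ t in 𝓝[>] (0 : ℝ), f x₀ ≤ f x + c * ‖x - x₀‖ ^ 2 * t :=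
    (hsegment.and (hlineMap.eventually hloc)).mono fun t ⟨ht, hle⟩ =>
      hf.le_add_mul_of_le_add_sq_norm_lineMap hx₀ hx ht hle
  have hlimit : Tendsto (fun t : ℝ => f x + c * ‖x - x₀‖ ^ 2 * t) (𝓝[>] 0) (𝓝 (f x)) := by
    refine (Continuous.tendsto' ?_ 0 _ (by simp)).mono_left nhdsWithin_le_nhds
    fun_prop
  exact ge_of_tendsto hlimit hbound

end

/-- Here `M a x y` denotes `M_a(y; x)` and `H x y` denotes `H(y; x)`. -/
theorem stmt_6_general {n : ℕ} {ι : Type*} (X : Set (EuclideanSpace ℝ (Fin n)))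
    (hXconv : Convex ℝ X)
    (H : EuclideanSpace ℝ (Fin n) → EuclideanSpace ℝ (Fin n) → ℝ)
    (A : EuclideanSpace ℝ (Fin n) → Finset ι)
    (hA : ∀ x ∈ X, (A x).Nonempty)
    (M : ι → EuclideanSpace ℝ (Fin n) → EuclideanSpace ℝ (Fin n) → ℝ)
    (hconv : ∀ x ∈ X, ∀ a ∈ A x, ConvexOn ℝ Set.univ (M a x))
    (hb : ∃ μbar : ℝ, 0 ≤ μbar ∧ ∀ x (hx : x ∈ X), ∀ y ∈ X,
      H x y ≤ (A x).inf' (hA x hx) (fun a => M a x y) + μbar / 2 * ‖y - x‖ ^ 2)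
    (xbar : EuclideanSpace ℝ (Fin n)) (hxbar : xbar ∈ X)
    (hlocal : ∃ U ∈ nhds xbar, ∀ y ∈ X ∩ U, H xbar xbar ≤ H xbar y) :
    ∀ a ∈ A xbar, M a xbar xbar = H xbar xbar →
      ∀ x ∈ X, M a xbar xbar ≤ M a xbar x := by
  intro a ha hactive
  obtain ⟨μ, -, hmodel⟩ := hb
  obtain ⟨U, hU, hmin⟩ := hlocal
  have hlocal_piece : ∀ᶠ y in 𝓝[X] xbar,
      M a xbar xbar ≤ M a xbar y + μ / 2 * ‖y - xbar‖ ^ 2 := by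
    filter_upwards [self_mem_nhdsWithin, mem_nhdsWithin_of_mem_nhds hU] with y hyX hyU
    calc M a xbar xbar = H xbar xbar := hactive
      _ ≤ H xbar y := hmin y ⟨hyX, hyU⟩
      _ ≤ (A xbar).inf' (hA xbar hxbar) (fun b => M b xbar y) + μ / 2 * ‖y - xbar‖ ^ 2 :=
        hmodel xbar hxbar y hyX
      _ ≤ M a xbar y + μ / 2 * ‖y - xbar‖ ^ 2 := by gcongr; exact Finset.inf'_le _ ha
  have hpiece_convex : ConvexOn ℝ X (M a xbar) :=
    (hconv xbar hxbar a ha).subset (subset_univ X) hXconv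
  exact hpiece_convex.isMinOn_of_eventually_le_add_sq_norm_sub hxbar hlocal_piece

/-- Theorem on model criticality: if `x̄` is a local minimizer over `X` of the improvement
function `H(·; x̄)` and the model `M(·;x) = min_{a ∈ A x} M_a(·;x)` satisfies the model
assumptions, then `x̄` globally minimizes over `X` every convex piece `M_a(·; x̄)` that is
active, i.e. with `M_a(x̄;x̄) = H(x̄;x̄)`. Here `M a x y` denotes `M_a(y; x)` and
`H x y` denotes `H(y; x)`. -/
theorem stmt_6 {n : ℕ} {ι : Type*} (X : Set (EuclideanSpace ℝ (Fin n)))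
    (hXne : X.Nonempty) (hXclosed : IsClosed X) (hXconv : Convex ℝ X)
    (H : EuclideanSpace ℝ (Fin n) → EuclideanSpace ℝ (Fin n) → ℝ)
    (A : EuclideanSpace ℝ (Fin n) → Finset ι)
    (hA : ∀ x ∈ X, (A x).Nonempty)
    (M : ι → EuclideanSpace ℝ (Fin n) → EuclideanSpace ℝ (Fin n) → ℝ)
    (hconv : ∀ x ∈ X, ∀ a ∈ A x, ConvexOn ℝ Set.univ (M a x))
    (ha : ∀ x (hx : x ∈ X), (A x).inf' (hA x hx) (fun a => M a x x) = H x x)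
    (hb : ∃ μbar : ℝ, 0 ≤ μbar ∧ ∀ x (hx : x ∈ X), ∀ y ∈ X,
      H x y ≤ (A x).inf' (hA x hx) (fun a => M a x y) + μbar / 2 * ‖y - x‖ ^ 2)
    (xbar : EuclideanSpace ℝ (Fin n)) (hxbar : xbar ∈ X)
    (hlocal : ∃ U ∈ nhds xbar, ∀ y ∈ X ∩ U, H xbar xbar ≤ H xbar y) :
    ∀ a ∈ A xbar, M a xbar xbar = H xbar xbar →
      ∀ x ∈ X, M a xbar xbar ≤ M a xbar x :=
  stmt_6_general X hXconv H A hA M hconv hb xbar hxbar hlocal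
end

section
/- Consider the proximal-type algorithm on problem min_{x∈X} f(x) s.t. c(x) ≤ 0, with improvement function H(y;x) = max{f(y) − f(x) − ρ[c(x)]₊, c(y)}, ρ ∈ [0,1], and parameters κ ∈ (0,1), λ ∈ [0,κ). Suppose the sequence of serious iterates {xᵏ} ⊆ X satisfies, for all k ≥ k₁, xᵏ⁺¹ ∈ X and H(xᵏ⁺¹; xᵏ) ≤ H(xᵏ; xᵏ) − ((κ−λ)/2)‖xᵏ⁺¹ − xᵏ‖², and that c(x^{k₁}) ≤ 0. If f is continuous and {xᵏ} is bounded, then c(xᵏ) ≤ 0 for all k ≥ k₁, f(xᵏ⁺¹) ≤ f(xᵏ) − ((κ−λ)/2)‖xᵏ⁺¹ − xᵏ‖² for all k ≥ k₁, Σ_{k≥k₁} ‖xᵏ⁺¹ − xᵏ‖² < ∞, and ‖xᵏ⁺¹ − xᵏ‖ → 0. -/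
/-!
While the iterates are feasible, `H(x;x) = 0`, so the descent test forces both
`c(xᵏ⁺¹) ≤ -μ/2 ‖xᵏ⁺¹ - xᵏ‖²` and `f(xᵏ⁺¹) ≤ f(xᵏ) - μ/2 ‖xᵏ⁺¹ - xᵏ‖²` with `μ = κ - λ`.
The first keeps the next iterate feasible; the second, telescoped against the lower bound of
`f` on the compact closure of the iterates, makes the squared steps summable.
-/

open Filter Topology

def improvement {α : Type*} (f c : α → ℝ) (ρ : ℝ) (x y : α) : ℝ :=
  max (f y - (f x + ρ * max (c x) 0)) (c y)

section Improvement

variable {α : Type*} {f c : α → ℝ} {ρ : ℝ} {x y : α}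

lemma improvement_self_of_nonpos (hx : c x ≤ 0) : improvement f c ρ x x = 0 := by
  simp only [improvement, max_eq_right hx, mul_zero, add_zero, sub_self, max_eq_left hx]

lemma improvement_descent_of_nonpos {m : ℝ} (hx : c x ≤ 0)
    (h : improvement f c ρ x y ≤ improvement f c ρ x x - m) :
    c y ≤ -m ∧ f y ≤ f x - m := by
  rw [improvement_self_of_nonpos hx, zero_sub] at h
  have hf := (le_max_left _ _).trans h
  rw [max_eq_right hx, mul_zero, add_zero] at hf
  exact ⟨(le_max_right _ _).trans h, by linarith⟩

end Improvement

lemma summable_of_le_sub_of_bddBelow {u d : ℕ → ℝ} {k₀ : ℕ} (hd : ∀ k, 0 ≤ d k)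
    (hu : BddBelow (Set.range u)) (hdesc : ∀ k ≥ k₀, u (k + 1) ≤ u k - d k) :
    Summable d := by
  obtain ⟨B, hB⟩ := hu
  have htelescope : ∀ N, ∑ i ∈ Finset.range N, d (i + k₀) ≤ u k₀ - u (N + k₀) := by
    intro N
    induction N with
    | zero => simp
    | succ N ih =>
      have := hdesc (N + k₀) (Nat.le_add_left _ _)
      rw [Finset.sum_range_succ, Nat.add_right_comm]
      linarith
  refine (summable_nat_add_iff k₀).mp (summable_of_sum_range_le (c := u k₀ - B)
    (fun i => hd _) fun N => ?_)
  linarith [htelescope N, hB ⟨N + k₀, rfl⟩]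

lemma tendsto_zero_of_summable_sq {a : ℕ → ℝ} (ha : ∀ k, 0 ≤ a k)
    (h : Summable fun k => a k ^ 2) : Tendsto a atTop (𝓝 0) := by
  have := (Real.continuous_sqrt.tendsto 0).comp h.tendsto_atTop_zero
  simpa [Function.comp_def, Real.sqrt_sq (ha _)] using this

theorem stmt_13_general {n : ℕ}
    (f c : EuclideanSpace ℝ (Fin n) → ℝ) (hf : Continuous f)
    (ρ : ℝ)
    (κ lam : ℝ) (hlam : lam < κ)
    (x : ℕ → EuclideanSpace ℝ (Fin n))
    (hbdd : Bornology.IsBounded (Set.range x))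
    (k₁ : ℕ) (hfeas : c (x k₁) ≤ 0)
    (hdesc : ∀ k ≥ k₁,
      max (f (x (k + 1)) - (f (x k) + ρ * max (c (x k)) 0)) (c (x (k + 1)))
        ≤ max (f (x k) - (f (x k) + ρ * max (c (x k)) 0)) (c (x k))
          - (κ - lam) / 2 * ‖x (k + 1) - x k‖ ^ 2) :
    (∀ k ≥ k₁, c (x k) ≤ 0) ∧
    (∀ k ≥ k₁, f (x (k + 1)) ≤ f (x k) - (κ - lam) / 2 * ‖x (k + 1) - x k‖ ^ 2) ∧
    Summable (fun k => ‖x (k + 1) - x k‖ ^ 2) ∧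
    Tendsto (fun k => ‖x (k + 1) - x k‖) atTop (nhds 0) := by
  have hμ : 0 < (κ - lam) / 2 := by linarith
  have hstep : ∀ k ≥ k₁, c (x k) ≤ 0 →
      c (x (k + 1)) ≤ -((κ - lam) / 2 * ‖x (k + 1) - x k‖ ^ 2) ∧
        f (x (k + 1)) ≤ f (x k) - (κ - lam) / 2 * ‖x (k + 1) - x k‖ ^ 2 :=
    fun k hk hck => improvement_descent_of_nonpos hck (hdesc k hk)
  have hfeas' : ∀ k ≥ k₁, c (x k) ≤ 0 := by
    intro k hk
    induction k, hk using Nat.le_induction with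
    | base => exact hfeas
    | succ k hk ih => exact (hstep k hk ih).1.trans (neg_nonpos.mpr (by positivity))
  have hfdec : ∀ k ≥ k₁, f (x (k + 1)) ≤ f (x k) - (κ - lam) / 2 * ‖x (k + 1) - x k‖ ^ 2 :=
    fun k hk => (hstep k hk (hfeas' k hk)).2
  have hfbdd : BddBelow (Set.range (f ∘ x)) :=
    ((hbdd.isCompact_closure.image hf).isBounded.subset
      ((Set.range_comp f x).trans_subset (Set.image_mono subset_closure))).bddBelow
  have hsum : Summable (fun k => ‖x (k + 1) - x k‖ ^ 2) :=
    (summable_mul_left_iff hμ.ne').mp <|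
      summable_of_le_sub_of_bddBelow (fun k => by positivity) hfbdd hfdec
  exact ⟨hfeas', hfdec, hsum, tendsto_zero_of_summable_sq (fun _ => norm_nonneg _) hsum⟩

/-- Serious-step descent analysis: if the iterates satisfy the descent test of the
improvement function and start feasible, then they stay feasible, `f` decreases with
a quadratic margin, the squared step lengths are summable, and the step lengths vanish. -/
theorem stmt_13 {n : ℕ} (X : Set (EuclideanSpace ℝ (Fin n)))
    (f c : EuclideanSpace ℝ (Fin n) → ℝ) (hf : Continuous f) (hc : Continuous c)
    (ρ : ℝ) (hρ0 : 0 ≤ ρ) (hρ1 : ρ ≤ 1)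
    (κ lam : ℝ) (hκ0 : 0 < κ) (hκ1 : κ < 1) (hlam0 : 0 ≤ lam) (hlam : lam < κ)
    (x : ℕ → EuclideanSpace ℝ (Fin n)) (hxX : ∀ k, x k ∈ X)
    (hbdd : Bornology.IsBounded (Set.range x))
    (k₁ : ℕ) (hfeas : c (x k₁) ≤ 0)
    (hdesc : ∀ k ≥ k₁,
      max (f (x (k + 1)) - (f (x k) + ρ * max (c (x k)) 0)) (c (x (k + 1)))
        ≤ max (f (x k) - (f (x k) + ρ * max (c (x k)) 0)) (c (x k))
          - (κ - lam) / 2 * ‖x (k + 1) - x k‖ ^ 2) :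
    (∀ k ≥ k₁, c (x k) ≤ 0) ∧
    (∀ k ≥ k₁, f (x (k + 1)) ≤ f (x k) - (κ - lam) / 2 * ‖x (k + 1) - x k‖ ^ 2) ∧
    Summable (fun k => ‖x (k + 1) - x k‖ ^ 2) ∧
    Tendsto (fun k => ‖x (k + 1) - x k‖) atTop (nhds 0) :=
  stmt_13_general f c hf ρ κ lam hlam x hbdd k₁ hfeas hdesc
end

section
/- Let M : ℝⁿ × ℝⁿ → ℝ be a model with M(·;x) = min_{a∈A(x)} M_a(·;x), each M_a(·;x) convex, satisfying M(x;x) = H(x;x) and H(y;x) ≤ M(y;x) + (μ̄/2)‖y−x‖² for all x, y ∈ X, where X ⊆ ℝⁿ is nonempty closed convex and H is the improvement function. In the proximal algorithm, if at iteration k the prox parameter satisfies μᵏ ≥ μ̄ + κ and yᵏ is an εᵏ-solution of min_{y∈X} M(y;xᵏ) + (μᵏ/2)‖y−xᵏ‖² with 0 ≤ εᵏ ≤ (λ/2)‖yᵏ−xᵏ‖², then the descent test holds: H(yᵏ;xᵏ) ≤ H(xᵏ;xᵏ) − ((κ−λ)/2)‖yᵏ−xᵏ‖². -/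
/-- If the prox parameter satisfies `μᵏ ≥ μ̄ + κ` and `yᵏ` is an `εᵏ`-solution of the
proximal subproblem with `0 ≤ εᵏ ≤ (λ/2)‖yᵏ−xᵏ‖²`, then the descent test holds:
`H(yᵏ;xᵏ) ≤ H(xᵏ;xᵏ) − ((κ−λ)/2)‖yᵏ−xᵏ‖²`. Here `M a x y` denotes `M_a(y;x)`,
`H x y = max (f y − (f x + ρ[c x]₊)) (c y)` denotes `H(y;x)`. -/
theorem stmt_14 {n : ℕ} {ι : Type*} (X : Set (EuclideanSpace ℝ (Fin n)))
    (hXne : X.Nonempty) (hXclosed : IsClosed X) (hXconv : Convex ℝ X)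
    (f c : EuclideanSpace ℝ (Fin n) → ℝ) (ρ : ℝ) (hρ : 0 ≤ ρ)
    (H : EuclideanSpace ℝ (Fin n) → EuclideanSpace ℝ (Fin n) → ℝ)
    (hH : ∀ x y, H x y = max (f y - (f x + ρ * max (c x) 0)) (c y))
    (A : EuclideanSpace ℝ (Fin n) → Finset ι) (hA : ∀ x ∈ X, (A x).Nonempty)
    (M : ι → EuclideanSpace ℝ (Fin n) → EuclideanSpace ℝ (Fin n) → ℝ)
    (hconv : ∀ x ∈ X, ∀ a ∈ A x, ConvexOn ℝ Set.univ (M a x))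
    (ha : ∀ x (hx : x ∈ X), (A x).inf' (hA x hx) (fun a => M a x x) = H x x)
    (μbar : ℝ) (hμbar0 : 0 ≤ μbar)
    (hb : ∀ x (hx : x ∈ X), ∀ y ∈ X,
      H x y ≤ (A x).inf' (hA x hx) (fun a => M a x y) + μbar / 2 * ‖y - x‖ ^ 2)
    (κ lam : ℝ) (hκ0 : 0 < κ) (hκ1 : κ < 1) (hlam0 : 0 ≤ lam) (hlam : lam < κ)
    (μk : ℝ) (hμk : μbar + κ ≤ μk)
    (xk : EuclideanSpace ℝ (Fin n)) (hxk : xk ∈ X)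
    (yk : EuclideanSpace ℝ (Fin n)) (hyk : yk ∈ X)
    (εk : ℝ) (hεk0 : 0 ≤ εk) (hεk : εk ≤ lam / 2 * ‖yk - xk‖ ^ 2)
    (hεsol : ∀ y ∈ X,
      (A xk).inf' (hA xk hxk) (fun a => M a xk yk) + μk / 2 * ‖yk - xk‖ ^ 2
        ≤ (A xk).inf' (hA xk hxk) (fun a => M a xk y) + μk / 2 * ‖y - xk‖ ^ 2 + εk) :
    H xk yk ≤ H xk xk - (κ - lam) / 2 * ‖yk - xk‖ ^ 2 := by
  have h1 := hb xk hxk yk hyk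
  have h2 := hεsol xk hxk
  have h3 := ha xk hxk
  have hr : (0:ℝ) ≤ ‖yk - xk‖ ^ 2 := by positivity
  simp only [sub_self, norm_zero] at h2
  nlinarith [h2, h1, hεk]
end
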